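/- arXiv:2211.07765 — 2 statements merged into one kernel-verified Lean document; each statement's English description precedes it below -/
import Mathlib

section
/- With ψ⁰ as above (KoBoL with equal coefficients, ν ∈ (0,2), ν ≠ 1), for every φ ∈ (−π/2, π/2), ψ⁰(ρ e^{iφ}) / ρ^ν → −2c·Γ(−ν)·cos(νπ/2)·e^{iνφ} as ρ → +∞. -/
/-!
Write `z = i e^{iφ}`. For `|φ| < π/2` both `z` and `-z` have imaginary part `± cos φ ≠ 0`,
so they lie off the branch cut, and `(a + ρ z)^ν / ρ^ν = (a/ρ + z)^ν → z^ν` by continuity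
of the principal power there; the constant terms are `o(ρ^ν)`. Finally
`±z = e^{i(φ ± π/2)}` with `φ ± π/2 ∈ (-π, π)`, so
`z^ν + (-z)^ν = e^{iνφ} (e^{iνπ/2} + e^{-iνπ/2}) = 2 cos(νπ/2) e^{iνφ}`.
-/

open Complex Real Filter

namespace Complex

lemma ofReal_mul_cpow_of_pos {r : ℝ} (hr : 0 < r) {z : ℂ} (hz : z ≠ 0) (w : ℂ) :
    ((r : ℂ) * z) ^ w = (r : ℂ) ^ w * z ^ w := by
  have hr' : (r : ℂ) ≠ 0 := ofReal_ne_zero.mpr hr.ne'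
  rw [cpow_def_of_ne_zero (mul_ne_zero hr' hz), log_ofReal_mul hr hz, add_mul, exp_add,
    ← cpow_def_of_ne_zero hz, cpow_def_of_ne_zero hr', ofReal_log hr.le]

lemma exp_mul_I_cpow {θ : ℝ} (hθ : θ ∈ Set.Ioc (-π) π) (w : ℂ) :
    exp (θ * I) ^ w = exp (θ * I * w) := by
  rw [cpow_def_of_ne_zero (exp_ne_zero _), log_exp (by simpa using hθ.1) (by simpa using hθ.2)]

lemma tendsto_const_div_cpow_atTop (a : ℂ) {w : ℂ} (hw : 0 < w.re) :
    Tendsto (fun ρ : ℝ => a / (ρ : ℂ) ^ w) atTop (nhds 0) := by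
  rw [tendsto_zero_iff_norm_tendsto_zero]
  refine ((tendsto_const_nhds (x := ‖a‖)).div_atTop (tendsto_rpow_atTop hw)).congr' ?_
  filter_upwards [eventually_gt_atTop 0] with ρ hρ
  rw [norm_div, norm_cpow_eq_rpow_re_of_pos hρ]

lemma tendsto_add_ofReal_mul_cpow_div_cpow (a : ℂ) {z : ℂ} (hz : z ∈ slitPlane) (w : ℂ) :
    Tendsto (fun ρ : ℝ => (a + ρ * z) ^ w / (ρ : ℂ) ^ w) atTop (nhds (z ^ w)) := by
  have hshift : Tendsto (fun ρ : ℝ => a / ρ + z) atTop (nhds z) := by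
    simpa using (tendsto_const_div_cpow_atTop a (w := 1) one_pos).add_const z
  refine ((continuousAt_cpow_const hz).tendsto.comp hshift).congr' ?_
  filter_upwards [eventually_gt_atTop 0, hshift.eventually (isOpen_slitPlane.mem_nhds hz)]
    with ρ hρ hρz
  have hρ' : (ρ : ℂ) ≠ 0 := ofReal_ne_zero.mpr hρ.ne'
  rw [Function.comp_apply, show a + ρ * z = ρ * (a / ρ + z) by field_simp,
    ofReal_mul_cpow_of_pos hρ (slitPlane_ne_zero hρz),
    mul_div_cancel_left₀ _ (cpow_ne_zero_iff.mpr (Or.inl hρ'))]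

lemma cpow_I_mul_exp_add_cpow_neg_I_mul_exp {φ : ℝ} (hφ : φ ∈ Set.Ioo (-(π / 2)) (π / 2))
    (w : ℂ) :
    (I * exp (I * φ)) ^ w + (-(I * exp (I * φ))) ^ w
      = 2 * cos (w * π / 2) * exp (I * w * φ) := by
  obtain ⟨h₁, h₂⟩ := hφ
  have hplus : I * exp (I * φ) = exp (((φ + π / 2 : ℝ) : ℂ) * I) := by
    push_cast
    rw [add_mul, exp_add, exp_pi_div_two_mul_I]
    ring_nf
  have hminus : -(I * exp (I * φ)) = exp (((φ - π / 2 : ℝ) : ℂ) * I) := by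
    push_cast
    rw [sub_mul, exp_sub, exp_pi_div_two_mul_I, div_I]
    ring_nf
  rw [hminus, hplus, exp_mul_I_cpow ⟨by linarith, by linarith⟩,
    exp_mul_I_cpow ⟨by linarith, by linarith⟩, two_cos, add_mul, ← exp_add, ← exp_add]
  push_cast
  ring_nf

end Complex

theorem stmt12_general (c ν lm lp φ : ℝ) (hν : ν ∈ Set.Ioo (0:ℝ) 2)
    (hφ : φ ∈ Set.Ioo (-(π / 2)) (π / 2)) :
    Tendsto
      (fun ρ : ℝ =>
        (((c * Real.Gamma (-ν) : ℝ) : ℂ) *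
            (((-lm : ℂ) ^ (ν : ℂ)) -
              (((-lm : ℂ) - Complex.I * ((ρ : ℂ) * Complex.exp (Complex.I * (φ : ℂ)))) ^ (ν : ℂ)) +
              ((lp : ℂ) ^ (ν : ℂ)) -
              (((lp : ℂ) + Complex.I * ((ρ : ℂ) * Complex.exp (Complex.I * (φ : ℂ)))) ^ (ν : ℂ)))) /
          ((ρ : ℂ) ^ (ν : ℂ)))
      atTop
      (nhds ((((-2 * c * Real.Gamma (-ν) * Real.cos (ν * π / 2) : ℝ)) : ℂ) *
        Complex.exp (Complex.I * (ν : ℂ) * (φ : ℂ)))) := by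
  have hsum := cpow_I_mul_exp_add_cpow_neg_I_mul_exp hφ ν
  set z := I * exp (I * φ)
  have hcos : 0 < Real.cos φ := Real.cos_pos_of_mem_Ioo hφ
  have hz_im : z.im = Real.cos φ := by simp [z, exp_re, exp_im]
  have hz : z ∈ slitPlane := mem_slitPlane_iff.mpr (Or.inr (by rw [hz_im]; exact hcos.ne'))
  have hnz : -z ∈ slitPlane := mem_slitPlane_iff.mpr (Or.inr (by rw [neg_im, hz_im]; linarith))
  have hre : 0 < (ν : ℂ).re := by simpa using hν.1
  have hlim := tendsto_const_nhds (x := ((c * Real.Gamma (-ν) : ℝ) : ℂ)).mul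
    ((((tendsto_const_div_cpow_atTop ((-lm : ℂ) ^ (ν : ℂ)) hre).sub
      (tendsto_add_ofReal_mul_cpow_div_cpow (-lm) hnz ν)).add
      (tendsto_const_div_cpow_atTop ((lp : ℂ) ^ (ν : ℂ)) hre)).sub
      (tendsto_add_ofReal_mul_cpow_div_cpow lp hz ν))
  have hvalue :
      (((-2 * c * Real.Gamma (-ν) * Real.cos (ν * π / 2) : ℝ)) : ℂ) * exp (I * ν * φ) =
        ((c * Real.Gamma (-ν) : ℝ) : ℂ) * (0 - (-z) ^ (ν : ℂ) + 0 - z ^ (ν : ℂ)) := by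
    push_cast
    linear_combination (c * Real.Gamma (-ν) : ℂ) * hsum
  rw [hvalue]
  refine hlim.congr fun ρ => ?_
  rw [show (-lm : ℂ) - I * (ρ * exp (I * φ)) = -lm + ρ * -z by ring,
    show (lp : ℂ) + I * (ρ * exp (I * φ)) = lp + ρ * z by ring]
  ring

/-- For the KoBoL exponent with equal coefficients, for every `φ ∈ (−π/2, π/2)`,
`ψ⁰(ρ e^{iφ})/ρ^ν → −2c·Γ(−ν)·cos(νπ/2)·e^{iνφ}` as `ρ → +∞`. -/
theorem stmt12 (c ν lm lp φ : ℝ) (hc : 0 < c) (hν : ν ∈ Set.Ioo (0:ℝ) 2) (hν1 : ν ≠ 1)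
    (hlm : lm < 0) (hlp : 0 < lp) (hφ : φ ∈ Set.Ioo (-(π / 2)) (π / 2)) :
    Tendsto
      (fun ρ : ℝ =>
        (((c * Real.Gamma (-ν) : ℝ) : ℂ) *
            (((-lm : ℂ) ^ (ν : ℂ)) -
              (((-lm : ℂ) - Complex.I * ((ρ : ℂ) * Complex.exp (Complex.I * (φ : ℂ)))) ^ (ν : ℂ)) +
              ((lp : ℂ) ^ (ν : ℂ)) -
              (((lp : ℂ) + Complex.I * ((ρ : ℂ) * Complex.exp (Complex.I * (φ : ℂ)))) ^ (ν : ℂ)))) /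
          ((ρ : ℂ) ^ (ν : ℂ)))
      atTop
      (nhds ((((-2 * c * Real.Gamma (-ν) * Real.cos (ν * π / 2) : ℝ)) : ℂ) *
        Complex.exp (Complex.I * (ν : ℂ) * (φ : ℂ)))) :=
  stmt12_general c ν lm lp φ hν hφ
end

section
/- Let X be a Lévy process with two-sided exponential moment: E[e^{λX_1}] < ∞ for λ ∈ (λ₋', λ₊') with λ₋' < 0 < λ₊'. Then the running supremum at an independent exponential time X̄_{T_q} has finite exponential moments E[e^{λ X̄_{T_q}}] < ∞ for 0 ≤ λ < λ₊' sufficiently small relative to q, and the Wiener–Hopf factor φ_q^+(ξ) = E[e^{iξ X̄_{T_q}}] extends continuously to {Im ξ ≥ −λ} and analytically to {Im ξ > −λ}. -/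
/-!
Write `m = E[e^{λX₁}]`. Independence and stationarity of increments give
`E[e^{λX_{k/N}}] = m^{k/N}`, and since `m → 1` as `λ ↓ 0` we may take `λ` with
`e^{-q/4} < m < e^{q/4}`. On a grid `t₀ ≤ ⋯ ≤ t_N`, splitting `e^{λX_{t_N}}` at the first
index where the walk exceeds `α` into two independent factors gives the Doob-type bound
`P(max_k X_{t_k} > α) ≤ e^{-λα} E[e^{λX_{t_N}}] / min_k E[e^{λ(X_{t_N} - X_{t_k})}]`, hence
`P(sup_{[0,n]} X > α) ≤ e^{qn/2 - λα}` along dyadic times and, by right-continuity, for the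
supremum itself. Conditioning on `⌊T⌋` against the `Exp(q)` law of `T` yields
`P(X̄_T > α) ≤ K e^{-λα}`, so `e^{l X̄_T}` is integrable for `l < λ`. Finally `φ_q⁺(ξ)` is the
complex moment generating function of `X̄_T ≥ 0` at `iξ`, holomorphic wherever
`Re(iξ) = -Im ξ < λ/2`, hence continuous on `{Im ξ ≥ -λ/3}`.
-/

open MeasureTheory ProbabilityTheory Complex
open scoped ENNReal
open Finset

section

variable {Ω : Type*} {mΩ : MeasurableSpace Ω} {μ : Measure Ω}

def firstPassage (S : ℕ → Ω → ℝ) (α : ℝ) (k : ℕ) : Set Ω :=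
  {ω | (∀ j < k, S j ω ≤ α) ∧ α < S k ω}

lemma pairwiseDisjoint_firstPassage (S : ℕ → Ω → ℝ) (α : ℝ) (s : Set ℕ) :
    s.PairwiseDisjoint (firstPassage S α) := by
  intro i _ j _ hij
  refine Set.disjoint_left.mpr fun ω hi hj => ?_
  rcases hij.lt_or_gt with h | h
  · exact (hj.1 i h).not_gt hi.2
  · exact (hi.1 j h).not_gt hj.2

lemma setOf_exists_lt_eq_biUnion_firstPassage (S : ℕ → Ω → ℝ) (α : ℝ) (n : ℕ) :
    {ω | ∃ k ≤ n, α < S k ω} = ⋃ k ∈ range (n + 1), firstPassage S α k := by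
  ext ω
  simp only [firstPassage, Set.mem_ofPred_eq, Set.mem_iUnion, mem_range, exists_prop]
  constructor
  · intro h
    refine ⟨Nat.find h, by have := (Nat.find_spec h).1; omega, fun j hj => ?_,
      (Nat.find_spec h).2⟩
    exact not_lt.mp fun hjα => Nat.find_min h hj ⟨(hj.trans_le (Nat.find_spec h).1).le, hjα⟩
  · rintro ⟨k, hk, -, hkα⟩
    exact ⟨k, by omega, hkα⟩

lemma measurableSet_firstPassage {m : MeasurableSpace Ω} {S : ℕ → Ω → ℝ} {α : ℝ} {k : ℕ}
    (hS : ∀ j ≤ k, Measurable[m] (S j)) : MeasurableSet[m] (firstPassage S α k) := by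
  have h : firstPassage S α k = (⋂ j ∈ Set.Iio k, S j ⁻¹' Set.Iic α) ∩ S k ⁻¹' Set.Ioi α := by
    ext ω; simp [firstPassage]
  rw [h]
  exact (MeasurableSet.biInter (Set.to_countable _) fun j hj =>
    hS j (Set.mem_Iio.mp hj).le measurableSet_Iic).inter (hS k le_rfl measurableSet_Ioi)

section PartialSums

variable {Y : ℕ → Ω → ℝ} {n : ℕ}

abbrev sigmaOn (Y : ℕ → Ω → ℝ) (n : ℕ) (s : Set ℕ) : MeasurableSpace Ω :=
  ⨆ j ∈ {j : Fin n | (j : ℕ) ∈ s}, MeasurableSpace.comap (Y j) Real.measurableSpace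

lemma sigmaOn_le (hY : ∀ j, Measurable (Y j)) (s : Set ℕ) : sigmaOn Y n s ≤ mΩ :=
  iSup₂_le fun j _ => (hY j).comap_le

lemma measurable_sum_sigmaOn {s : Set ℕ} {t : Finset ℕ} (ht : ∀ j ∈ t, j < n ∧ j ∈ s) :
    Measurable[sigmaOn Y n s] fun ω => ∑ j ∈ t, Y j ω :=
  Finset.measurable_sum t fun j hj =>
    (comap_measurable (Y j)).mono
      (le_iSup₂ (f := fun (i : Fin n) (_ : i ∈ {i : Fin n | (i : ℕ) ∈ s}) =>
        MeasurableSpace.comap (Y i) Real.measurableSpace) ⟨j, (ht j hj).1⟩ (ht j hj).2) le_rfl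

lemma indep_sigmaOn (hY : ∀ j, Measurable (Y j)) (hind : iIndepFun (fun j : Fin n => Y j) μ)
    {s t : Set ℕ} (hst : Disjoint s t) : Indep (sigmaOn Y n s) (sigmaOn Y n t) μ :=
  indep_iSup_of_disjoint (fun j : Fin n => (hY j).comap_le)
    ((iIndepFun_iff_iIndep _ (fun j : Fin n => Y j) μ).mp hind)
    (Set.disjoint_left.mpr fun _ hjs hjt => Set.disjoint_left.mp hst hjs hjt)

lemma setLIntegral_exp_sum_range_eq_mul (hY : ∀ j, Measurable (Y j))
    (hind : iIndepFun (fun j : Fin n => Y j) μ) (l : ℝ) {k : ℕ} (hk : k ≤ n) {A : Set Ω}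
    (hA : MeasurableSet[sigmaOn Y n (Set.Iio k)] A) :
    ∫⁻ ω in A, ENNReal.ofReal (Real.exp (l * ∑ j ∈ range n, Y j ω)) ∂μ
      = (∫⁻ ω in A, ENNReal.ofReal (Real.exp (l * ∑ j ∈ range k, Y j ω)) ∂μ)
        * ∫⁻ ω, ENNReal.ofReal (Real.exp (l * ∑ j ∈ Ico k n, Y j ω)) ∂μ := by
  have hpast : Measurable[sigmaOn Y n (Set.Iio k)] fun ω => ∑ j ∈ range k, Y j ω :=
    measurable_sum_sigmaOn fun j hj => by simp only [mem_range] at hj; exact ⟨by omega, hj⟩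
  have hfuture : Measurable[sigmaOn Y n (Set.Ici k)] fun ω => ∑ j ∈ Ico k n, Y j ω :=
    measurable_sum_sigmaOn fun j hj => by simp only [mem_Ico] at hj; exact ⟨hj.2, hj.1⟩
  have hsplit : ∀ ω, A.indicator (fun ω => ENNReal.ofReal (Real.exp (l * ∑ j ∈ range n, Y j ω))) ω
      = A.indicator (fun ω => ENNReal.ofReal (Real.exp (l * ∑ j ∈ range k, Y j ω))) ω
        * ENNReal.ofReal (Real.exp (l * ∑ j ∈ Ico k n, Y j ω)) := by
    intro ω
    by_cases hω : ω ∈ A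
    · rw [Set.indicator_of_mem hω, Set.indicator_of_mem hω, ← sum_range_add_sum_Ico _ hk,
        mul_add, Real.exp_add, ENNReal.ofReal_mul (Real.exp_nonneg _)]
    · simp only [Set.indicator_of_notMem hω, zero_mul]
  have hA' : MeasurableSet A := sigmaOn_le hY _ _ hA
  rw [← lintegral_indicator hA', ← lintegral_indicator hA', lintegral_congr hsplit,
    lintegral_mul_eq_lintegral_mul_lintegral_of_independent_measurableSpace
      (sigmaOn_le hY _) (sigmaOn_le hY _) (indep_sigmaOn hY hind (Set.Iio_disjoint_Ici le_rfl))
      ((hpast.const_mul l).exp.ennreal_ofReal.indicator hA)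
      (hfuture.const_mul l).exp.ennreal_ofReal]

theorem maximal_ineq_exp_sum_range (hY : ∀ j, Measurable (Y j))
    (hind : iIndepFun (fun j : Fin n => Y j) μ) {l : ℝ} (hl : 0 ≤ l) (α : ℝ) {b : ℝ≥0∞}
    (hb : ∀ k ≤ n, b ≤ ∫⁻ ω, ENNReal.ofReal (Real.exp (l * ∑ j ∈ Ico k n, Y j ω)) ∂μ) :
    ENNReal.ofReal (Real.exp (l * α)) * b * μ {ω | ∃ k ≤ n, α < ∑ j ∈ range k, Y j ω}
      ≤ ∫⁻ ω, ENNReal.ofReal (Real.exp (l * ∑ j ∈ range n, Y j ω)) ∂μ := by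
  set S : ℕ → Ω → ℝ := fun k ω => ∑ j ∈ range k, Y j ω
  set A := firstPassage S α
  have hA : ∀ k ≤ n, MeasurableSet[sigmaOn Y n (Set.Iio k)] (A k) := fun k hk =>
    measurableSet_firstPassage fun j hj => measurable_sum_sigmaOn fun i hi => by
      simp only [mem_range] at hi; exact ⟨by omega, by simp only [Set.mem_Iio]; omega⟩
  have hA' : ∀ k ∈ range (n + 1), MeasurableSet (A k) := fun k hk =>
    sigmaOn_le hY _ _ (hA k (by simp only [mem_range] at hk; omega))
  have hdisj := pairwiseDisjoint_firstPassage S α (range (n + 1) : Set ℕ)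
  calc ENNReal.ofReal (Real.exp (l * α)) * b * μ {ω | ∃ k ≤ n, α < S k ω}
      = ∑ k ∈ range (n + 1), ENNReal.ofReal (Real.exp (l * α)) * μ (A k) * b := by
        rw [setOf_exists_lt_eq_biUnion_firstPassage, measure_biUnion_finset hdisj hA', mul_sum]
        exact sum_congr rfl fun k _ => by ring
    _ ≤ ∑ k ∈ range (n + 1), ∫⁻ ω in A k, ENNReal.ofReal (Real.exp (l * S n ω)) ∂μ := by
        refine sum_le_sum fun k hk => ?_
        have hk : k ≤ n := by simp only [mem_range] at hk; omega
        have hpassage : ENNReal.ofReal (Real.exp (l * α)) * μ (A k)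
            ≤ ∫⁻ ω in A k, ENNReal.ofReal (Real.exp (l * S k ω)) ∂μ :=
          setLIntegral_const (A k) _ ▸ setLIntegral_mono' (sigmaOn_le hY _ _ (hA k hk))
            fun ω hω => ENNReal.ofReal_le_ofReal
              (Real.exp_le_exp.mpr (mul_le_mul_of_nonneg_left hω.2.le hl))
        rw [setLIntegral_exp_sum_range_eq_mul hY hind l hk (hA k hk)]
        exact mul_le_mul' hpassage (hb k hk)
    _ = ∫⁻ ω in ⋃ k ∈ range (n + 1), A k, ENNReal.ofReal (Real.exp (l * S n ω)) ∂μ :=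
        (lintegral_biUnion_finset hdisj hA' _).symm
    _ ≤ _ := setLIntegral_le_lintegral _ _

end PartialSums

lemma exists_dyadic_lt_of_lt_sSup {f : ℝ → ℝ} (hf : ∀ t, ContinuousWithinAt f (Set.Ici t) t)
    {b α : ℝ} (hb : 0 ≤ b) {n : ℕ} (hbn : b ≤ n) (hα : α < sSup (f '' Set.Icc 0 b)) :
    ∃ p k : ℕ, k ≤ n * 2 ^ p ∧ α < f (k / 2 ^ p) := by
  obtain ⟨_, ⟨s, ⟨hs0, hsb⟩, rfl⟩, hαs⟩ :=
    exists_lt_of_lt_csSup ((Set.nonempty_Icc.mpr hb).image f) hα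
  obtain ⟨u, hsu, hu⟩ := mem_nhdsGE_iff_exists_Ico_subset.mp ((hf s).eventually (lt_mem_nhds hαs))
  obtain ⟨p, hp⟩ := exists_pow_lt_of_lt_one (sub_pos.mpr hsu) (by norm_num : (1 / 2 : ℝ) < 1)
  have h2p : (0 : ℝ) < 2 ^ p := by positivity
  refine ⟨p, ⌈s * 2 ^ p⌉₊, Nat.ceil_le.mpr (by push_cast; gcongr; linarith), hu ⟨?_, ?_⟩⟩
  · rw [le_div_iff₀ h2p]; exact Nat.le_ceil _
  · rw [div_lt_iff₀ h2p]
    rw [div_pow, one_pow, lt_sub_iff_add_lt] at hp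
    calc _ < s * 2 ^ p + 1 := Nat.ceil_lt_add_one (by positivity)
      _ = (1 / 2 ^ p + s) * 2 ^ p := by field_simp; ring
      _ < u * 2 ^ p := by gcongr

lemma measure_preimage_Ico_le [IsProbabilityMeasure μ] {T : Ω → ℝ} {q : ℝ} (hq : 0 ≤ q)
    (hTlaw : ∀ s : ℝ, 0 ≤ s → μ {ω | s < T ω} = ENNReal.ofReal (Real.exp (-q * s))) (n : ℕ) :
    μ (T ⁻¹' Set.Ico n (n + 1)) ≤ ENNReal.ofReal (Real.exp (-q * (n - 1))) := by
  cases n with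
  | zero => exact prob_le_one.trans (ENNReal.one_le_ofReal.mpr (Real.one_le_exp (by simp [hq])))
  | succ n =>
    rw [Nat.cast_succ, add_sub_cancel_right, ← hTlaw n n.cast_nonneg]
    exact measure_mono fun ω hω => (lt_add_one (n : ℝ)).trans_le hω.1

theorem measure_lt_sSup_le [IsProbabilityMeasure μ] {X : ℝ → Ω → ℝ} {T : Ω → ℝ}
    {q γ β α : ℝ} (hq : 0 ≤ q) (hright : ∀ ω t, ContinuousWithinAt (fun s => X s ω) (Set.Ici t) t)
    (hT0 : ∀ ω, 0 ≤ T ω)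
    (hTlaw : ∀ s : ℝ, 0 ≤ s → μ {ω | s < T ω} = ENNReal.ofReal (Real.exp (-q * s)))
    (hTindep : IndepFun T (fun ω => (fun t => X t ω : ℝ → ℝ)) μ)
    (hpath : ∀ n : ℕ, μ {ω | ∃ p k : ℕ, k ≤ n * 2 ^ p ∧ α < X (k / 2 ^ p) ω}
      ≤ ENNReal.ofReal (Real.exp (γ * n - β))) :
    μ {ω | α < sSup ((fun s => X s ω) '' Set.Icc 0 (T ω))}
      ≤ ENNReal.ofReal (Real.exp (q + γ)) * (1 - ENNReal.ofReal (Real.exp (γ - q)))⁻¹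
        * ENNReal.ofReal (Real.exp (-β)) := by
  set S : ℕ → Set (ℝ → ℝ) := fun n => {f | ∃ p k : ℕ, k ≤ n * 2 ^ p ∧ α < f (k / 2 ^ p)}
  have hS : ∀ n, MeasurableSet (S n) := fun n => by
    simp only [S, Set.ofPred_exists, Set.ofPred_and]
    exact .iUnion fun p => .iUnion fun k =>
      (MeasurableSet.const _).inter (measurableSet_lt measurable_const (measurable_pi_apply _))
  have hcover : {ω | α < sSup ((fun s => X s ω) '' Set.Icc 0 (T ω))}
      ⊆ ⋃ n : ℕ, T ⁻¹' Set.Ico n (n + 1) ∩ (fun ω t => X t ω) ⁻¹' S (n + 1) := by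
    intro ω hω
    refine Set.mem_iUnion.mpr ⟨⌊T ω⌋₊, ⟨Nat.floor_le (hT0 ω), Nat.lt_floor_add_one _⟩, ?_⟩
    exact exists_dyadic_lt_of_lt_sSup (hright ω) (hT0 ω)
      (by push_cast; exact (Nat.lt_floor_add_one _).le) hω
  calc μ {ω | α < sSup ((fun s => X s ω) '' Set.Icc 0 (T ω))}
      ≤ ∑' n : ℕ, μ (T ⁻¹' Set.Ico n (n + 1) ∩ (fun ω t => X t ω) ⁻¹' S (n + 1)) :=
        (measure_mono hcover).trans (measure_iUnion_le _)
    _ ≤ ∑' n : ℕ,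
          ENNReal.ofReal (Real.exp (q + γ - β)) * ENNReal.ofReal (Real.exp (γ - q)) ^ n := by
        refine ENNReal.tsum_le_tsum fun n => ?_
        rw [hTindep.measure_inter_preimage_eq_mul _ _ measurableSet_Ico (hS (n + 1))]
        refine (mul_le_mul' (measure_preimage_Ico_le hq hTlaw n) (hpath (n + 1))).trans
          (le_of_eq ?_)
        rw [← ENNReal.ofReal_mul (Real.exp_nonneg _), ← ENNReal.ofReal_pow (Real.exp_nonneg _),
          ← ENNReal.ofReal_mul (Real.exp_nonneg _), ← Real.exp_add, ← Real.exp_nat_mul,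
          ← Real.exp_add]
        congr 2
        push_cast
        ring
    _ = ENNReal.ofReal (Real.exp (q + γ)) * (1 - ENNReal.ofReal (Real.exp (γ - q)))⁻¹
        * ENNReal.ofReal (Real.exp (-β)) := by
        rw [ENNReal.tsum_mul_left, ENNReal.tsum_geometric, sub_eq_add_neg, Real.exp_add,
          ENNReal.ofReal_mul (Real.exp_nonneg _)]
        ring

theorem integrable_exp_mul_of_measure_lt_le {M : Ω → ℝ} (hM : Measurable M)
    (hM0 : ∀ ω, 0 ≤ M ω) {K : ℝ≥0∞} (hK : K ≠ ∞) {β l : ℝ} (hl : 0 ≤ l) (hlβ : l < β)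
    (htail : ∀ α, μ {ω | α < M ω} ≤ K * ENNReal.ofReal (Real.exp (-(β * α)))) :
    Integrable (fun ω => Real.exp (l * M ω)) μ := by
  refine ⟨(hM.const_mul l).exp.aestronglyMeasurable, ?_⟩
  rw [hasFiniteIntegral_iff_ofReal (.of_forall fun ω => Real.exp_nonneg _)]
  set A : ℕ → Set Ω := fun j => {ω | (j : ℝ) - 1 < M ω}
  have hA : ∀ j, MeasurableSet (A j) := fun j => hM measurableSet_Ioi
  have hpt : ∀ ω, ENNReal.ofReal (Real.exp (l * M ω))
      ≤ ∑' j : ℕ, (A j).indicator (fun _ => ENNReal.ofReal (Real.exp (l * (j + 1)))) ω := by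
    intro ω
    refine le_trans ?_ (ENNReal.le_tsum ⌊M ω⌋₊)
    rw [Set.indicator_of_mem (show ω ∈ A ⌊M ω⌋₊ by
      simp only [A, Set.mem_ofPred_eq]; linarith [Nat.floor_le (hM0 ω)])]
    exact ENNReal.ofReal_le_ofReal (Real.exp_le_exp.mpr
      (mul_le_mul_of_nonneg_left (Nat.lt_floor_add_one _).le hl))
  have hr : ENNReal.ofReal (Real.exp (l - β)) < 1 :=
    ENNReal.ofReal_lt_one.mpr (Real.exp_lt_one_iff.mpr (by linarith))
  calc ∫⁻ ω, ENNReal.ofReal (Real.exp (l * M ω)) ∂μ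
      ≤ ∑' j : ℕ, ENNReal.ofReal (Real.exp (l * (j + 1))) * μ (A j) := by
        refine (lintegral_mono hpt).trans_eq ?_
        rw [lintegral_tsum fun j => (measurable_const.indicator (hA j)).aemeasurable]
        simp only [lintegral_indicator_const (hA _)]
    _ ≤ ∑' j : ℕ,
          K * ENNReal.ofReal (Real.exp (l + β)) * ENNReal.ofReal (Real.exp (l - β)) ^ j := by
        refine ENNReal.tsum_le_tsum fun j => ?_
        refine (mul_le_mul_right (htail _) _).trans (le_of_eq ?_)
        rw [← ENNReal.ofReal_pow (Real.exp_nonneg _), ← Real.exp_nat_mul, mul_left_comm, mul_assoc,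
          ← ENNReal.ofReal_mul (Real.exp_nonneg _), ← ENNReal.ofReal_mul (Real.exp_nonneg _),
          ← Real.exp_add, ← Real.exp_add]
        congr 3
        ring
    _ < ∞ := by
        rw [ENNReal.tsum_mul_left, ENNReal.tsum_geometric]
        exact ENNReal.mul_lt_top (ENNReal.mul_lt_top hK.lt_top ENNReal.ofReal_lt_top)
          (ENNReal.inv_lt_top.mpr (tsub_pos_of_lt hr))

lemma Iio_subset_interior_integrableExpSet {M : Ω → ℝ} (hM : Measurable M)
    (hM0 : ∀ ω, 0 ≤ M ω) {l : ℝ} (hl : Integrable (fun ω => Real.exp (l * M ω)) μ) :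
    Set.Iio l ⊆ interior (integrableExpSet M μ) := by
  rw [← interior_Iic]
  exact interior_mono fun t ht => hl.mono' (hM.const_mul t).exp.aestronglyMeasurable
    (.of_forall fun ω => by
      rw [Real.norm_of_nonneg (Real.exp_nonneg _)]
      exact Real.exp_le_exp.mpr (mul_le_mul_of_nonneg_right ht (hM0 ω)))

lemma differentiableOn_complexMGF_I_mul {M : Ω → ℝ} (hM : Measurable M)
    (hM0 : ∀ ω, 0 ≤ M ω) {l : ℝ} (hl : Integrable (fun ω => Real.exp (l * M ω)) μ) :
    DifferentiableOn ℂ (fun ξ => complexMGF M μ (I * ξ)) {ξ : ℂ | -l < ξ.im} :=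
  differentiableOn_complexMGF.comp (differentiableOn_id.const_mul I) fun ξ hξ =>
    Iio_subset_interior_integrableExpSet hM hM0 hl (by simpa [neg_lt] using hξ)

lemma exists_pos_mgf_mem_Ioo [IsProbabilityMeasure μ] {Y : Ω → ℝ}
    (h0 : 0 ∈ interior (integrableExpSet Y μ)) {a b : ℝ} (hab : (1 : ℝ) ∈ Set.Ioo a b)
    {c : ℝ} (hc : 0 < c) :
    ∃ l ∈ Set.Ioo 0 c, l ∈ integrableExpSet Y μ ∧ mgf Y μ l ∈ Set.Ioo a b := by
  have hcont : ContinuousAt (mgf Y μ) 0 :=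
    continuousOn_mgf.continuousAt (isOpen_interior.mem_nhds h0)
  have hint : ∀ᶠ l in nhds 0, l ∈ integrableExpSet Y μ :=
    Filter.mem_of_superset (isOpen_interior.mem_nhds h0) interior_subset
  have hmgf : ∀ᶠ l in nhds 0, mgf Y μ l ∈ Set.Ioo a b :=
    hcont.eventually (Ioo_mem_nhds (mgf_zero (μ := μ) ▸ hab.1) (mgf_zero (μ := μ) ▸ hab.2))
  have hpos : ∀ᶠ l in nhdsWithin 0 (Set.Ioi 0), l ∈ Set.Ioo 0 c := Ioo_mem_nhdsGT hc
  exact (hpos.and (nhdsWithin_le_nhds (hint.and hmgf))).exists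

structure HasIndepStationaryIncrements (X : ℝ → Ω → ℝ) (μ : Measure Ω) : Prop where
  zero : ∀ ω, X 0 ω = 0
  measurable : ∀ t, Measurable (X t)
  iIndepFun_sub : ∀ (n : ℕ) (t : Fin (n + 1) → ℝ), Monotone t → (∀ i, 0 ≤ t i) →
    iIndepFun (fun i : Fin n => fun ω => X (t i.succ) ω - X (t i.castSucc) ω) μ
  map_sub : ∀ s t : ℝ, 0 ≤ s → s ≤ t →
    Measure.map (fun ω => X t ω - X s ω) μ = Measure.map (fun ω => X (t - s) ω) μ

noncomputable def expMoment (μ : Measure Ω) (X : ℝ → Ω → ℝ) (l t : ℝ) : ℝ≥0∞ :=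
  ∫⁻ ω, ENNReal.ofReal (Real.exp (l * X t ω)) ∂μ

lemma expMoment_eq_ofReal_mgf {X : ℝ → Ω → ℝ} {l t : ℝ} (h : l ∈ integrableExpSet (X t) μ) :
    expMoment μ X l t = ENNReal.ofReal (mgf (X t) μ l) :=
  (ofReal_integral_eq_lintegral_ofReal h (.of_forall fun _ => Real.exp_nonneg _)).symm

namespace HasIndepStationaryIncrements

variable {X : ℝ → Ω → ℝ}

lemma lintegral_exp_mul_sub (hX : HasIndepStationaryIncrements X μ) (l : ℝ) {s t : ℝ}
    (hs : 0 ≤ s) (hst : s ≤ t) :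
    ∫⁻ ω, ENNReal.ofReal (Real.exp (l * (X t ω - X s ω))) ∂μ = expMoment μ X l (t - s) := by
  have hg : Measurable fun x : ℝ => ENNReal.ofReal (Real.exp (l * x)) := by fun_prop
  have hf : Measurable fun ω => X t ω - X s ω := (hX.measurable t).sub (hX.measurable s)
  rw [← lintegral_map hg hf, hX.map_sub s t hs hst,
    lintegral_map hg (hX.measurable _), expMoment]

lemma sum_range_sub_grid (hX : HasIndepStationaryIncrements X μ) {t : ℕ → ℝ} (ht0 : t 0 = 0)
    (k : ℕ) (ω : Ω) : ∑ j ∈ range k, (X (t (j + 1)) ω - X (t j) ω) = X (t k) ω := by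
  rw [sum_range_sub (fun j => X (t j) ω), ht0, hX.zero, sub_zero]

lemma iIndepFun_sub_grid (hX : HasIndepStationaryIncrements X μ) {t : ℕ → ℝ}
    (ht : Monotone t) (ht0 : t 0 = 0) (n : ℕ) :
    iIndepFun (fun j : Fin n => fun ω => X (t (j + 1)) ω - X (t j) ω) μ := by
  simpa using hX.iIndepFun_sub n (fun i => t i) (ht.comp Fin.val_strictMono.monotone)
    fun i => ht0 ▸ ht (Nat.zero_le i)

lemma expMoment_grid_eq_mul (hX : HasIndepStationaryIncrements X μ) {t : ℕ → ℝ}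
    (ht : Monotone t) (ht0 : t 0 = 0) (l : ℝ) {k n : ℕ} (hk : k ≤ n) :
    expMoment μ X l (t n) = expMoment μ X l (t k) * expMoment μ X l (t n - t k) := by
  have h := setLIntegral_exp_sum_range_eq_mul (Y := fun j ω => X (t (j + 1)) ω - X (t j) ω)
    (fun j => (hX.measurable _).sub (hX.measurable _)) (hX.iIndepFun_sub_grid ht ht0 n) l hk
    MeasurableSet.univ
  simp only [Measure.restrict_univ, hX.sum_range_sub_grid ht0, sum_Ico_eq_sub _ hk] at h
  rw [expMoment, expMoment, h, hX.lintegral_exp_mul_sub l (ht0 ▸ ht (Nat.zero_le k)) (ht hk)]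

theorem maximal_ineq_grid (hX : HasIndepStationaryIncrements X μ) {t : ℕ → ℝ}
    (ht : Monotone t) (ht0 : t 0 = 0) {l : ℝ} (hl : 0 ≤ l) (α : ℝ) {n : ℕ} {b : ℝ≥0∞}
    (hb : ∀ k ≤ n, b ≤ expMoment μ X l (t n - t k)) :
    ENNReal.ofReal (Real.exp (l * α)) * b * μ {ω | ∃ k ≤ n, α < X (t k) ω}
      ≤ expMoment μ X l (t n) := by
  have h := maximal_ineq_exp_sum_range (Y := fun j ω => X (t (j + 1)) ω - X (t j) ω)
    (fun j => (hX.measurable _).sub (hX.measurable _)) (hX.iIndepFun_sub_grid ht ht0 n) hl α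
    (b := b) fun k hk => by
      simp only [sum_Ico_eq_sub _ hk, hX.sum_range_sub_grid ht0]
      rw [hX.lintegral_exp_mul_sub l (ht0 ▸ ht (Nat.zero_le k)) (ht hk)]
      exact hb k hk
  simpa only [hX.sum_range_sub_grid ht0, expMoment] using h

lemma expMoment_natCast_mul [IsProbabilityMeasure μ] (hX : HasIndepStationaryIncrements X μ)
    (l : ℝ) {u : ℝ} (hu : 0 ≤ u) (k : ℕ) : expMoment μ X l (k * u) = expMoment μ X l u ^ k := by
  induction k with
  | zero => simp [expMoment, hX.zero]
  | succ k ih =>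
    have h := hX.expMoment_grid_eq_mul (t := fun j : ℕ => j * u)
      (fun i j hij => mul_le_mul_of_nonneg_right (Nat.cast_le.mpr hij) hu) (by simp) l k.le_succ
    simp only [Nat.cast_succ, add_mul, one_mul, add_sub_cancel_left] at h
    rw [Nat.cast_succ, add_mul, one_mul, h, ih, pow_succ]

lemma expMoment_one_eq_pow [IsProbabilityMeasure μ] (hX : HasIndepStationaryIncrements X μ)
    (l : ℝ) {N : ℕ} (hN : N ≠ 0) :
    expMoment μ X l 1 = expMoment μ X l (N : ℝ)⁻¹ ^ N := by
  rw [← hX.expMoment_natCast_mul l (by positivity), mul_inv_cancel₀ (Nat.cast_ne_zero.mpr hN)]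

lemma expMoment_div_le [IsProbabilityMeasure μ] (hX : HasIndepStationaryIncrements X μ)
    (l : ℝ) {N k n : ℕ} (hN : N ≠ 0) (hk : k ≤ n * N) :
    expMoment μ X l (k / N) ≤ max 1 (expMoment μ X l 1) ^ n := by
  set y := expMoment μ X l (N : ℝ)⁻¹
  calc expMoment μ X l (k / N) = y ^ k := by
        rw [div_eq_mul_inv, hX.expMoment_natCast_mul l (by positivity)]
    _ ≤ max 1 y ^ (n * N) :=
        (pow_le_pow_left₀ zero_le (le_max_right _ _) k).trans
          (pow_le_pow_right₀ (le_max_left _ _) hk)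
    _ = max 1 (expMoment μ X l 1) ^ n := by
        rw [mul_comm, pow_mul, (pow_left_mono N).map_max, one_pow, hX.expMoment_one_eq_pow l hN]

lemma min_pow_le_expMoment_div [IsProbabilityMeasure μ] (hX : HasIndepStationaryIncrements X μ)
    (l : ℝ) {N k n : ℕ} (hN : N ≠ 0) (hk : k ≤ n * N) :
    min 1 (expMoment μ X l 1) ^ n ≤ expMoment μ X l (k / N) := by
  set y := expMoment μ X l (N : ℝ)⁻¹
  calc min 1 (expMoment μ X l 1) ^ n = min 1 y ^ (n * N) := by
        rw [mul_comm, pow_mul, (pow_left_mono N).map_min, one_pow, hX.expMoment_one_eq_pow l hN]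
    _ ≤ y ^ k :=
        (pow_le_pow_right_of_le_one' (min_le_left _ _) hk).trans
          (pow_le_pow_left₀ zero_le (min_le_right _ _) k)
    _ = expMoment μ X l (k / N) := by
        rw [div_eq_mul_inv, hX.expMoment_natCast_mul l (by positivity)]

theorem measure_exists_lt_dyadic_le [IsProbabilityMeasure μ]
    (hX : HasIndepStationaryIncrements X μ) {l : ℝ} (hl : 0 ≤ l) (n : ℕ) (α : ℝ) :
    ENNReal.ofReal (Real.exp (l * α)) * min 1 (expMoment μ X l 1) ^ n
        * μ {ω | ∃ p k : ℕ, k ≤ n * 2 ^ p ∧ α < X (k / 2 ^ p) ω}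
      ≤ max 1 (expMoment μ X l 1) ^ n := by
  set E : ℕ → Set Ω := fun p => {ω | ∃ k ≤ n * 2 ^ p, α < X (k / 2 ^ p) ω}
  have hE : Monotone E := monotone_nat_of_le_succ fun p ω ⟨k, hk, hkα⟩ =>
    ⟨2 * k, by rw [pow_succ]; nlinarith, by
      rwa [Nat.cast_mul, Nat.cast_two, pow_succ, mul_comm 2, mul_div_mul_right _ _ two_ne_zero]⟩
  have hunion : {ω | ∃ p k : ℕ, k ≤ n * 2 ^ p ∧ α < X (k / 2 ^ p) ω} = ⋃ p, E p := by
    ext ω; simp [E]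
  rw [hunion, hE.measure_iUnion, ENNReal.mul_iSup]
  refine iSup_le fun p => ?_
  have h2p : 2 ^ p ≠ 0 := pow_ne_zero p two_ne_zero
  have hgrid : ∀ k : ℕ, (k : ℝ) / 2 ^ p = k / ((2 ^ p : ℕ) : ℝ) := fun k => by push_cast; rfl
  have h := hX.maximal_ineq_grid (t := fun k : ℕ => k / 2 ^ p)
    (fun i j hij => by dsimp only; gcongr) (by simp) hl α (n := n * 2 ^ p)
    (b := min 1 (expMoment μ X l 1) ^ n) fun k hk => by
      rw [← sub_div, ← Nat.cast_sub hk, hgrid]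
      exact hX.min_pow_le_expMoment_div l h2p (Nat.sub_le _ _)
  refine h.trans ?_
  rw [hgrid]
  exact hX.expMoment_div_le l h2p le_rfl

theorem measure_exists_lt_dyadic_le_exp [IsProbabilityMeasure μ]
    (hX : HasIndepStationaryIncrements X μ) {l : ℝ} (hl : 0 ≤ l) {a : ℝ} (ha : 0 ≤ a)
    (hc : expMoment μ X l 1
      ∈ Set.Icc (ENNReal.ofReal (Real.exp (-a))) (ENNReal.ofReal (Real.exp a)))
    (n : ℕ) (α : ℝ) :
    μ {ω | ∃ p k : ℕ, k ≤ n * 2 ^ p ∧ α < X (k / 2 ^ p) ω}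
      ≤ ENNReal.ofReal (Real.exp (2 * a * n - l * α)) := by
  have hmin : ENNReal.ofReal (Real.exp (-a)) ≤ min 1 (expMoment μ X l 1) :=
    le_min (ENNReal.ofReal_le_one.mpr (Real.exp_le_one_iff.mpr (by linarith))) hc.1
  have hmax : max 1 (expMoment μ X l 1) ≤ ENNReal.ofReal (Real.exp a) :=
    max_le (ENNReal.one_le_ofReal.mpr (Real.one_le_exp ha)) hc.2
  have hpow : ∀ x : ℝ, ENNReal.ofReal (Real.exp x) ^ n = ENNReal.ofReal (Real.exp (n * x)) :=
    fun x => by rw [← ENNReal.ofReal_pow (Real.exp_nonneg _), ← Real.exp_nat_mul]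
  have hpos : 0 < Real.exp (l * α - a * n) := Real.exp_pos _
  rw [show 2 * a * n - l * α = a * n - (l * α - a * n) by ring, Real.exp_sub,
    ENNReal.ofReal_div_of_pos hpos, ENNReal.le_div_iff_mul_le
    (.inl (ENNReal.ofReal_pos.mpr hpos).ne') (.inl ENNReal.ofReal_ne_top)]
  calc _ = ENNReal.ofReal (Real.exp (l * α)) * ENNReal.ofReal (Real.exp (-a)) ^ n
        * μ {ω | ∃ p k : ℕ, k ≤ n * 2 ^ p ∧ α < X (k / 2 ^ p) ω} := by
        rw [hpow, ← ENNReal.ofReal_mul (Real.exp_nonneg _), ← Real.exp_add, mul_neg,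
          ← sub_eq_add_neg, mul_comm (n : ℝ) a, mul_comm]
    _ ≤ ENNReal.ofReal (Real.exp (l * α)) * min 1 (expMoment μ X l 1) ^ n
        * μ {ω | ∃ p k : ℕ, k ≤ n * 2 ^ p ∧ α < X (k / 2 ^ p) ω} := by gcongr
    _ ≤ max 1 (expMoment μ X l 1) ^ n := hX.measure_exists_lt_dyadic_le hl n α
    _ ≤ ENNReal.ofReal (Real.exp a) ^ n := by gcongr
    _ = _ := by rw [hpow]; ring_nf

end HasIndepStationaryIncrements

end

theorem stmt18_general {Ω : Type*} [MeasurableSpace Ω] (μ : Measure Ω) [IsProbabilityMeasure μ]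
    (X : ℝ → Ω → ℝ) (T : Ω → ℝ) (q lm' lp' : ℝ) (hq : 0 < q) (hlm : lm' < 0) (hlp : 0 < lp')
    -- X is a Lévy process started at 0:
    (hX0 : ∀ ω, X 0 ω = 0)
    (hXmeas : ∀ t, Measurable (X t))
    (hcadlag : ∀ ω t, ContinuousWithinAt (fun s => X s ω) (Set.Ici t) t)
    (hindep : ∀ (n : ℕ) (t : Fin (n + 1) → ℝ), Monotone t → (∀ i, 0 ≤ t i) →
      iIndepFun
        (fun i : Fin n => fun ω => X (t i.succ) ω - X (t i.castSucc) ω) μ)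
    (hstat : ∀ s t : ℝ, 0 ≤ s → s ≤ t →
      Measure.map (fun ω => X t ω - X s ω) μ = Measure.map (fun ω => X (t - s) ω) μ)
    -- two-sided exponential moment:
    (hmom : ∀ l : ℝ, l ∈ Set.Ioo lm' lp' → Integrable (fun ω => Real.exp (l * X 1 ω)) μ)
    -- T is exponentially distributed with rate q, independent of X:
    (hT0 : ∀ ω, 0 ≤ T ω)
    (hTlaw : ∀ s : ℝ, 0 ≤ s → μ {ω | s < T ω} = ENNReal.ofReal (Real.exp (-q * s)))
    (hTindep : IndepFun T (fun ω => (fun t => X t ω : ℝ → ℝ)) μ)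
    -- the running supremum at time `T` is well-defined and measurable:
    (hMmeas : Measurable (fun ω => sSup ((fun s => X s ω) '' Set.Icc 0 (T ω)))) :
    ∃ l : ℝ, l ∈ Set.Ioo 0 lp' ∧
      Integrable (fun ω =>
        Real.exp (l * sSup ((fun s => X s ω) '' Set.Icc 0 (T ω)))) μ ∧
      ∃ φ : ℂ → ℂ,
        ContinuousOn φ {ξ : ℂ | -l ≤ ξ.im} ∧
        DifferentiableOn ℂ φ {ξ : ℂ | -l < ξ.im} ∧
        ∀ ξ : ℝ, φ (ξ : ℂ) = ∫ ω, Complex.exp (Complex.I * (ξ : ℂ) *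
          (sSup ((fun s => X s ω) '' Set.Icc 0 (T ω)) : ℝ)) ∂μ := by
  have hX : HasIndepStationaryIncrements X μ := ⟨hX0, hXmeas, hindep, hstat⟩
  set M : Ω → ℝ := fun ω => sSup ((fun s => X s ω) '' Set.Icc 0 (T ω))
  have hM0 : ∀ ω, 0 ≤ M ω := fun ω =>
    Real.sSup_nonneg' ⟨0, ⟨0, ⟨le_rfl, hT0 ω⟩, hX0 ω⟩, le_rfl⟩
  have h0 : (0 : ℝ) ∈ interior (integrableExpSet (X 1) μ) :=
    mem_interior_iff_mem_nhds.mpr (Filter.mem_of_superset (Ioo_mem_nhds hlm hlp) hmom)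
  obtain ⟨l, ⟨hl0, hllp⟩, hl_int, hl_mgf⟩ := exists_pos_mgf_mem_Ioo h0
    ⟨Real.exp_lt_one_iff.mpr (by linarith), Real.one_lt_exp_iff.mpr (by linarith)⟩ hlp
    (a := Real.exp (-(q / 4))) (b := Real.exp (q / 4))
  have hc : expMoment μ X l 1
      ∈ Set.Icc (ENNReal.ofReal (Real.exp (-(q / 4)))) (ENNReal.ofReal (Real.exp (q / 4))) := by
    rw [expMoment_eq_ofReal_mgf hl_int]
    exact ⟨ENNReal.ofReal_le_ofReal hl_mgf.1.le, ENNReal.ofReal_le_ofReal hl_mgf.2.le⟩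
  have hK : ENNReal.ofReal (Real.exp (q + 2 * (q / 4)))
      * (1 - ENNReal.ofReal (Real.exp (2 * (q / 4) - q)))⁻¹ ≠ ∞ :=
    ENNReal.mul_ne_top ENNReal.ofReal_ne_top (ENNReal.inv_ne_top.mpr (tsub_pos_of_lt
      (ENNReal.ofReal_lt_one.mpr (Real.exp_lt_one_iff.mpr (by linarith)))).ne')
  have hint : ∀ l', 0 ≤ l' → l' < l → Integrable (fun ω => Real.exp (l' * M ω)) μ :=
    fun l' hl' hl'l => integrable_exp_mul_of_measure_lt_le hMmeas hM0 hK hl' hl'l fun α =>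
      measure_lt_sSup_le hq.le hcadlag hT0 hTlaw hTindep
        (hX.measure_exists_lt_dyadic_le_exp hl0.le (by positivity) hc · α)
  refine ⟨l / 3, ⟨by positivity, by linarith⟩, hint _ (by positivity) (by linarith),
    fun ξ => complexMGF M μ (I * ξ), ?_, ?_, fun ξ => rfl⟩
  · refine (differentiableOn_complexMGF_I_mul hMmeas hM0
      (hint (l / 2) (by positivity) (by linarith))).continuousOn.mono fun ξ hξ => ?_
    simp only [Set.mem_ofPred_eq] at hξ ⊢
    linarith
  · exact differentiableOn_complexMGF_I_mul hMmeas hM0 (hint _ (by positivity) (by linarith))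

/-- For a Lévy process `X` with a two-sided exponential moment
(`E[e^{λX₁}] < ∞` for `λ ∈ (λ₋', λ₊')`, `λ₋' < 0 < λ₊'`) and `T ~ Exp(q)` independent of
`X`, the running supremum `X̄_T` has a finite exponential moment `E[e^{λ X̄_T}] < ∞` for
some sufficiently small `λ ∈ (0, λ₊')`, and the Wiener–Hopf factor
`φ_q⁺(ξ) = E[e^{iξ X̄_T}]` extends continuously to `{Im ξ ≥ −λ}` and analytically to
`{Im ξ > −λ}`. -/
theorem stmt18 {Ω : Type*} [MeasurableSpace Ω] (μ : Measure Ω) [IsProbabilityMeasure μ]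
    (X : ℝ → Ω → ℝ) (T : Ω → ℝ) (q lm' lp' : ℝ) (hq : 0 < q) (hlm : lm' < 0) (hlp : 0 < lp')
    -- X is a Lévy process started at 0:
    (hX0 : ∀ ω, X 0 ω = 0)
    (hXmeas : ∀ t, Measurable (X t))
    (hcadlag : ∀ ω t, ContinuousWithinAt (fun s => X s ω) (Set.Ici t) t)
    (hindep : ∀ (n : ℕ) (t : Fin (n + 1) → ℝ), Monotone t → (∀ i, 0 ≤ t i) →
      iIndepFun
        (fun i : Fin n => fun ω => X (t i.succ) ω - X (t i.castSucc) ω) μ)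
    (hstat : ∀ s t : ℝ, 0 ≤ s → s ≤ t →
      Measure.map (fun ω => X t ω - X s ω) μ = Measure.map (fun ω => X (t - s) ω) μ)
    -- two-sided exponential moment:
    (hmom : ∀ l : ℝ, l ∈ Set.Ioo lm' lp' → Integrable (fun ω => Real.exp (l * X 1 ω)) μ)
    -- T is exponentially distributed with rate q, independent of X:
    (hT0 : ∀ ω, 0 ≤ T ω)
    (hTlaw : ∀ s : ℝ, 0 ≤ s → μ {ω | s < T ω} = ENNReal.ofReal (Real.exp (-q * s)))
    (hTindep : IndepFun T (fun ω => (fun t => X t ω : ℝ → ℝ)) μ)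
    -- the running supremum at time `T` is well-defined and measurable:
    (hbdd : ∀ ω, BddAbove ((fun s => X s ω) '' Set.Icc 0 (T ω)))
    (hMmeas : Measurable (fun ω => sSup ((fun s => X s ω) '' Set.Icc 0 (T ω)))) :
    ∃ l : ℝ, l ∈ Set.Ioo 0 lp' ∧
      Integrable (fun ω =>
        Real.exp (l * sSup ((fun s => X s ω) '' Set.Icc 0 (T ω)))) μ ∧
      ∃ φ : ℂ → ℂ,
        ContinuousOn φ {ξ : ℂ | -l ≤ ξ.im} ∧
        DifferentiableOn ℂ φ {ξ : ℂ | -l < ξ.im} ∧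
        ∀ ξ : ℝ, φ (ξ : ℂ) = ∫ ω, Complex.exp (Complex.I * (ξ : ℂ) *
          (sSup ((fun s => X s ω) '' Set.Icc 0 (T ω)) : ℝ)) ∂μ :=
  stmt18_general μ X T q lm' lp' hq hlm hlp hX0 hXmeas hcadlag hindep hstat hmom hT0 hTlaw hTindep
    hMmeas
end
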